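/- The integrability (Frobenius/compatibility) condition for the first-order system ∂_z F = A(z,z̄)F, ∂_{z̄} F = B(z,z̄)F with A = [[0,1,0],[0,ψ_z,Ue^(−ψ)],[e^ψ/2,0,0]] and B = [[0,0,1],[e^ψ/2,0,0],[0,Ūe^(−ψ),ψ_{z̄}]] is equivalent to the two equations ψ_{zz̄} + |U|²e^(−2ψ) − (1/2)e^ψ = 0 and U_{z̄} = 0. That is, ∂_{z̄}A − ∂_z B + AB − BA = 0 holds if and only if both equations hold. -/

import Mathlib

noncomputable section

/-- Wirtinger derivative `∂_z = (∂_x − i∂_y)/2` of a function `ℂ → ℂ`. -/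
def wz (F : ℂ → ℂ) (z : ℂ) : ℂ :=
  (fderiv ℝ F z 1 - Complex.I * fderiv ℝ F z Complex.I) / 2

/-- Conjugate Wirtinger derivative `∂_z̄ = (∂_x + i∂_y)/2`. -/
def wzbar (F : ℂ → ℂ) (z : ℂ) : ℂ :=
  (fderiv ℝ F z 1 + Complex.I * fderiv ℝ F z Complex.I) / 2

lemma wz_const (c z : ℂ) : wz (fun _ => c) z = 0 := by
  simp [wz, fderiv_const]
lemma wzbar_const (c z : ℂ) : wzbar (fun _ => c) z = 0 := by
  simp [wzbar, fderiv_const]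

lemma wz_mul {f g : ℂ → ℂ} {z : ℂ} (hf : DifferentiableAt ℝ f z)
    (hg : DifferentiableAt ℝ g z) :
    wz (fun w => f w * g w) z = wz f z * g z + f z * wz g z := by
  simp only [wz, fderiv_fun_mul hf hg, ContinuousLinearMap.add_apply,
    ContinuousLinearMap.smul_apply, smul_eq_mul]
  ring

lemma wzbar_mul {f g : ℂ → ℂ} {z : ℂ} (hf : DifferentiableAt ℝ f z)
    (hg : DifferentiableAt ℝ g z) :
    wzbar (fun w => f w * g w) z = wzbar f z * g z + f z * wzbar g z := by
  simp only [wzbar, fderiv_fun_mul hf hg, ContinuousLinearMap.add_apply,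
    ContinuousLinearMap.smul_apply, smul_eq_mul]
  ring

lemma fderiv_cexp_comp {h : ℂ → ℂ} {z : ℂ} (hh : DifferentiableAt ℝ h z) (v : ℂ) :
    fderiv ℝ (fun w => Complex.exp (h w)) z v = Complex.exp (h z) * fderiv ℝ h z v := by
  have H : HasFDerivAt (fun w => Complex.exp (h w))
      (Complex.exp (h z) • (fderiv ℝ h z)) z := by
    have h1 : HasFDerivAt Complex.exp
        (ContinuousLinearMap.smulRight (1 : ℂ →L[ℂ] ℂ) (Complex.exp (h z))) (h z) :=
      (Complex.hasDerivAt_exp (h z)).hasFDerivAt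
    have := (h1.restrictScalars ℝ).comp z hh.hasFDerivAt
    refine this.congr_fderiv ?_
    ext v
    simp [mul_comm]
  rw [H.fderiv]
  simp

lemma wz_exp {h : ℂ → ℂ} {z : ℂ} (hh : DifferentiableAt ℝ h z) :
    wz (fun w => Complex.exp (h w)) z = Complex.exp (h z) * wz h z := by
  simp only [wz, fderiv_cexp_comp hh]; ring

lemma wzbar_exp {h : ℂ → ℂ} {z : ℂ} (hh : DifferentiableAt ℝ h z) :
    wzbar (fun w => Complex.exp (h w)) z = Complex.exp (h z) * wzbar h z := by
  simp only [wzbar, fderiv_cexp_comp hh]; ring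

lemma fderiv_conj_comp {f : ℂ → ℂ} {z : ℂ} (hf : DifferentiableAt ℝ f z) (v : ℂ) :
    fderiv ℝ (fun w => (starRingEnd ℂ) (f w)) z v = (starRingEnd ℂ) (fderiv ℝ f z v) := by
  have H : HasFDerivAt (fun w => (starRingEnd ℂ) (f w))
      ((Complex.conjCLE.toContinuousLinearMap).comp (fderiv ℝ f z)) z :=
    Complex.conjCLE.toContinuousLinearMap.hasFDerivAt.comp z hf.hasFDerivAt
  rw [H.fderiv]; rfl

lemma wz_conj {f : ℂ → ℂ} {z : ℂ} (hf : DifferentiableAt ℝ f z) :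
    wz (fun w => (starRingEnd ℂ) (f w)) z = (starRingEnd ℂ) (wzbar f z) := by
  simp only [wz, wzbar, fderiv_conj_comp hf, map_div₀, map_add, map_mul, Complex.conj_I]
  rw [show ((starRingEnd ℂ) 2 : ℂ) = 2 from Complex.conj_ofNat 2]
  ring

lemma wz_const_mul {f : ℂ → ℂ} {z : ℂ} (hf : DifferentiableAt ℝ f z) (c : ℂ) :
    wz (fun w => c * f w) z = c * wz f z := by
  simp only [wz, fderiv_const_mul hf c, ContinuousLinearMap.smul_apply, smul_eq_mul]; ring

lemma wzbar_const_mul {f : ℂ → ℂ} {z : ℂ} (hf : DifferentiableAt ℝ f z) (c : ℂ) :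
    wzbar (fun w => c * f w) z = c * wzbar f z := by
  simp only [wzbar, fderiv_const_mul hf c, ContinuousLinearMap.smul_apply, smul_eq_mul]; ring

lemma wz_div_const {f : ℂ → ℂ} {z : ℂ} (hf : DifferentiableAt ℝ f z) (c : ℂ) :
    wz (fun w => f w / c) z = wz f z / c := by
  have h : (fun w => f w / c) = fun w => c⁻¹ * f w := by funext w; rw [div_eq_inv_mul]
  rw [h, wz_const_mul hf, inv_mul_eq_div]

lemma wzbar_div_const {f : ℂ → ℂ} {z : ℂ} (hf : DifferentiableAt ℝ f z) (c : ℂ) :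
    wzbar (fun w => f w / c) z = wzbar f z / c := by
  have h : (fun w => f w / c) = fun w => c⁻¹ * f w := by funext w; rw [div_eq_inv_mul]
  rw [h, wzbar_const_mul hf, inv_mul_eq_div]

lemma wz_neg {f : ℂ → ℂ} {z : ℂ} :
    wz (fun w => -f w) z = -wz f z := by
  simp only [wz, fderiv_fun_neg, ContinuousLinearMap.neg_apply]; ring

lemma wzbar_neg {f : ℂ → ℂ} {z : ℂ} :
    wzbar (fun w => -f w) z = -wzbar f z := by
  simp only [wzbar, fderiv_fun_neg, ContinuousLinearMap.neg_apply]; ring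

lemma wz_wzbar_comm {f : ℂ → ℂ} {z : ℂ} (hf : ContDiffAt ℝ 2 f z) :
    wz (wzbar f) z = wzbar (wz f) z := by
  have hsymm : IsSymmSndFDerivAt ℝ f z := hf.isSymmSndFDerivAt (by simp)
  have hd2 : DifferentiableAt ℝ (fderiv ℝ f) z :=
    (hf.fderiv_right (m := 1) (by norm_num)).differentiableAt one_ne_zero
  have hg : ∀ v : ℂ, DifferentiableAt ℝ (fun w => fderiv ℝ f w v) z := fun v =>
    (ContinuousLinearMap.apply ℝ ℂ v).differentiableAt.comp z hd2
  have key : ∀ v u : ℂ, fderiv ℝ (fun w => fderiv ℝ f w v) z u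
      = fderiv ℝ (fderiv ℝ f) z u v := by
    intro v u
    have : fderiv ℝ (fun w => fderiv ℝ f w v) z
        = (ContinuousLinearMap.apply ℝ ℂ v).comp (fderiv ℝ (fderiv ℝ f) z) :=
      ((ContinuousLinearMap.apply ℝ ℂ v).hasFDerivAt.comp z hd2.hasFDerivAt).fderiv
    rw [this]; rfl
  have hwzbar : ∀ u : ℂ, fderiv ℝ (wzbar f) z u
      = (fderiv ℝ (fderiv ℝ f) z u 1 + Complex.I * fderiv ℝ (fderiv ℝ f) z u Complex.I) / 2 := by
    intro u
    have e : wzbar f = fun w =>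
        ((fun w => fderiv ℝ f w 1) w + Complex.I * (fun w => fderiv ℝ f w Complex.I) w) / 2 := rfl
    rw [e]
    have h1 : (fun w => ((fun w => fderiv ℝ f w 1) w
        + Complex.I * (fun w => fderiv ℝ f w Complex.I) w) / 2)
        = fun w => (2 : ℂ)⁻¹ * ((fun w => fderiv ℝ f w 1) w
          + Complex.I * (fun w => fderiv ℝ f w Complex.I) w) := by
      funext w; rw [div_eq_inv_mul]
    rw [h1, fderiv_const_mul (((hg 1)).fun_add (((hg Complex.I)).const_mul _)),
      fderiv_fun_add (hg 1) (((hg Complex.I)).const_mul _), fderiv_const_mul (hg Complex.I)]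
    simp only [ContinuousLinearMap.smul_apply, ContinuousLinearMap.add_apply, smul_eq_mul, key]
    ring
  have hwz : ∀ u : ℂ, fderiv ℝ (wz f) z u
      = (fderiv ℝ (fderiv ℝ f) z u 1 - Complex.I * fderiv ℝ (fderiv ℝ f) z u Complex.I) / 2 := by
    intro u
    have e : wz f = fun w =>
        ((fun w => fderiv ℝ f w 1) w - Complex.I * (fun w => fderiv ℝ f w Complex.I) w) / 2 := rfl
    rw [e]
    have h1 : (fun w => ((fun w => fderiv ℝ f w 1) w
        - Complex.I * (fun w => fderiv ℝ f w Complex.I) w) / 2)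
        = fun w => (2 : ℂ)⁻¹ * ((fun w => fderiv ℝ f w 1) w
          - Complex.I * (fun w => fderiv ℝ f w Complex.I) w) := by
      funext w; rw [div_eq_inv_mul]
    rw [h1, fderiv_const_mul (((hg 1)).fun_sub (((hg Complex.I)).const_mul _)),
      fderiv_fun_sub (hg 1) (((hg Complex.I)).const_mul _), fderiv_const_mul (hg Complex.I)]
    simp only [ContinuousLinearMap.smul_apply, ContinuousLinearMap.sub_apply, smul_eq_mul, key]
    ring
  simp only [wz, wzbar, hwzbar, hwz]
  rw [hsymm.eq 1 Complex.I]
  ring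

set_option maxHeartbeats 1000000 in
/-- The zero-curvature (Frobenius) condition `∂_z̄A − ∂_zB + AB − BA = 0` for Wang's
developing system is equivalent, at each point of `D`, to the pair of equations
`ψ_zz̄ + |U|²e^(−2ψ) − ½e^ψ = 0` and `U_z̄ = 0`. -/
theorem stmt18 (D : Set ℂ) (hD : IsOpen D) (ψ : ℂ → ℝ) (U : ℂ → ℂ)
    (hψ : ContDiffOn ℝ (⊤ : ℕ∞) ψ D) (hU : ContDiffOn ℝ (⊤ : ℕ∞) U D) :
    let ψc : ℂ → ℂ := fun z => ((ψ z : ℝ) : ℂ)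
    let A : ℂ → Matrix (Fin 3) (Fin 3) ℂ := fun z =>
      !![0, 1, 0;
         0, wz ψc z, U z * Complex.exp (-ψc z);
         Complex.exp (ψc z) / 2, 0, 0]
    let B : ℂ → Matrix (Fin 3) (Fin 3) ℂ := fun z =>
      !![0, 0, 1;
         Complex.exp (ψc z) / 2, 0, 0;
         0, (starRingEnd ℂ) (U z) * Complex.exp (-ψc z), wzbar ψc z]
    ∀ z ∈ D,
      ((Matrix.of fun i j => wzbar (fun w => A w i j) z)
          - (Matrix.of fun i j => wz (fun w => B w i j) z) + A z * B z - B z * A z = 0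
        ↔ (wzbar (fun w => wz ψc w) z
              + ((‖U z‖ ^ 2 : ℝ) : ℂ) * Complex.exp (-2 * ψc z)
              - 1 / 2 * Complex.exp (ψc z) = 0
            ∧ wzbar U z = 0)) := by
  intro ψc A B z hz
  -- differentiability facts
  have hψt : ContDiffAt ℝ (⊤ : ℕ∞) ψ z := hψ.contDiffAt (hD.mem_nhds hz)
  have hco : ContDiffAt ℝ (⊤ : ℕ∞) ((↑) : ℝ → ℂ) (ψ z) := Complex.ofRealCLM.contDiff.contDiffAt
  have hψct : ContDiffAt ℝ (⊤ : ℕ∞) ψc z := hco.comp z hψt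
  have hψc2 : ContDiffAt ℝ 2 ψc z := hψct.of_le (WithTop.coe_le_coe.mpr le_top)
  have hψcd : DifferentiableAt ℝ ψc z := hψc2.differentiableAt two_ne_zero
  have hUd : DifferentiableAt ℝ U z :=
    (hU.contDiffAt (hD.mem_nhds hz)).differentiableAt (by simp)
  have hexpd : Differentiable ℝ Complex.exp := Complex.differentiable_exp (𝕜 := ℝ)
  have hexpneg : DifferentiableAt ℝ (fun w => Complex.exp (-ψc w)) z :=
    hexpd.differentiableAt.comp z hψcd.neg
  have hconjU : DifferentiableAt ℝ (fun w => (starRingEnd ℂ) (U w)) z := hUd.star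
  -- chain rule computations
  have hexpnegval : wzbar (fun w => Complex.exp (-ψc w)) z
      = Complex.exp (-ψc z) * -wzbar ψc z := by
    rw [show (fun w => Complex.exp (-ψc w)) = fun w => Complex.exp ((fun w => -ψc w) w) from rfl,
      wzbar_exp (h := fun w => -ψc w) hψcd.neg, wzbar_neg]
  have hexpnegval' : wz (fun w => Complex.exp (-ψc w)) z
      = Complex.exp (-ψc z) * -wz ψc z := by
    rw [show (fun w => Complex.exp (-ψc w)) = fun w => Complex.exp ((fun w => -ψc w) w) from rfl,
      wz_exp (h := fun w => -ψc w) hψcd.neg, wz_neg]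
  have e1 : wzbar (fun w => U w * Complex.exp (-ψc w)) z
      = wzbar U z * Complex.exp (-ψc z) + U z * (Complex.exp (-ψc z) * -wzbar ψc z) := by
    rw [wzbar_mul hUd hexpneg, hexpnegval]
  have e2 : wzbar (fun w => Complex.exp (ψc w) / 2) z
      = Complex.exp (ψc z) * wzbar ψc z / 2 := by
    rw [wzbar_div_const (f := fun w => Complex.exp (ψc w))
      (hexpd.differentiableAt.comp z hψcd) 2, wzbar_exp hψcd]
  have e3 : wz (fun w => Complex.exp (ψc w) / 2) z
      = Complex.exp (ψc z) * wz ψc z / 2 := by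
    rw [wz_div_const (f := fun w => Complex.exp (ψc w))
      (hexpd.differentiableAt.comp z hψcd) 2, wz_exp hψcd]
  have e4 : wz (fun w => (starRingEnd ℂ) (U w) * Complex.exp (-ψc w)) z
      = (starRingEnd ℂ) (wzbar U z) * Complex.exp (-ψc z)
        + (starRingEnd ℂ) (U z) * (Complex.exp (-ψc z) * -wz ψc z) := by
    rw [wz_mul hconjU hexpneg, hexpnegval', wz_conj hUd]
  have e5 : wz (fun w => wzbar ψc w) z = wzbar (fun w => wz ψc w) z :=
    wz_wzbar_comm hψc2
  -- the ∂z̄ A matrix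
  have hA : (Matrix.of fun i j => wzbar (fun w => A w i j) z) =
      !![0, 0, 0;
         0, wzbar (fun w => wz ψc w) z,
           wzbar U z * Complex.exp (-ψc z) + U z * (Complex.exp (-ψc z) * -wzbar ψc z);
         Complex.exp (ψc z) * wzbar ψc z / 2, 0, 0] := by
    ext i j
    fin_cases i <;> fin_cases j <;>
      simp [A, wzbar_const, e1, e2]
  -- the ∂z B matrix
  have hB : (Matrix.of fun i j => wz (fun w => B w i j) z) =
      !![0, 0, 0;
         Complex.exp (ψc z) * wz ψc z / 2, 0, 0;
         0, (starRingEnd ℂ) (wzbar U z) * Complex.exp (-ψc z)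
              + (starRingEnd ℂ) (U z) * (Complex.exp (-ψc z) * -wz ψc z),
           wzbar (fun w => wz ψc w) z] := by
    ext i j
    fin_cases i <;> fin_cases j <;>
      simp [B, wz_const, e3, e4, e5]
  -- scalar identities
  have hUU : U z * (starRingEnd ℂ) (U z) = ((‖U z‖ : ℝ) : ℂ) ^ 2 := by
    rw [Complex.mul_conj]; norm_cast; rw [Complex.sq_norm]
  have hexp2 : Complex.exp (-ψc z) * Complex.exp (-ψc z) = Complex.exp (-(2 * ψc z)) := by
    rw [← Complex.exp_add]; ring_nf
  set E : ℂ := wzbar (fun w => wz ψc w) z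
      + ((‖U z‖ ^ 2 : ℝ) : ℂ) * Complex.exp (-2 * ψc z)
      - 1 / 2 * Complex.exp (ψc z) with hE
  have hMAIN : (Matrix.of fun i j => wzbar (fun w => A w i j) z)
      - (Matrix.of fun i j => wz (fun w => B w i j) z) + A z * B z - B z * A z =
      !![0, 0, 0;
         0, E, wzbar U z * Complex.exp (-ψc z);
         0, -((starRingEnd ℂ) (wzbar U z) * Complex.exp (-ψc z)), -E] := by
    rw [hA, hB]
    show (_ : Matrix (Fin 3) (Fin 3) ℂ) = _
    simp only [A, B]
    ext i j
    fin_cases i <;> fin_cases j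
    · simp [Matrix.mul_apply, Fin.sum_univ_three, Matrix.vecHead, Matrix.vecTail]
    · simp [Matrix.mul_apply, Fin.sum_univ_three, Matrix.vecHead, Matrix.vecTail]
    · simp [Matrix.mul_apply, Fin.sum_univ_three, Matrix.vecHead, Matrix.vecTail]
    · simp [Matrix.mul_apply, Fin.sum_univ_three, Matrix.vecHead, Matrix.vecTail]
      try ring
    · simp [Matrix.mul_apply, Fin.sum_univ_three, Matrix.vecHead, Matrix.vecTail]
      rw [hE, neg_mul]
      push_cast
      linear_combination (Complex.exp (-ψc z) * Complex.exp (-ψc z)) * hUU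
        + ((‖U z‖ : ℝ) : ℂ) ^ 2 * hexp2
    · simp [Matrix.mul_apply, Fin.sum_univ_three, Matrix.vecHead, Matrix.vecTail]
      try ring
    · simp [Matrix.mul_apply, Fin.sum_univ_three, Matrix.vecHead, Matrix.vecTail]
      try ring
    · simp [Matrix.mul_apply, Fin.sum_univ_three, Matrix.vecHead, Matrix.vecTail]
      try ring
    · simp [Matrix.mul_apply, Fin.sum_univ_three, Matrix.vecHead, Matrix.vecTail]
      rw [hE, neg_mul]
      push_cast
      linear_combination (-(Complex.exp (-ψc z) * Complex.exp (-ψc z))) * hUU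
        - ((‖U z‖ : ℝ) : ℂ) ^ 2 * hexp2
  rw [hMAIN]
  constructor
  · intro h
    have h11 : (!![0, 0, 0;
         0, E, wzbar U z * Complex.exp (-ψc z);
         0, -((starRingEnd ℂ) (wzbar U z) * Complex.exp (-ψc z)), -E]
         : Matrix (Fin 3) (Fin 3) ℂ) 1 1 = 0 := by rw [h]; rfl
    have h12 : (!![0, 0, 0;
         0, E, wzbar U z * Complex.exp (-ψc z);
         0, -((starRingEnd ℂ) (wzbar U z) * Complex.exp (-ψc z)), -E]
         : Matrix (Fin 3) (Fin 3) ℂ) 1 2 = 0 := by rw [h]; rfl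
    simp only [Matrix.of_apply, Matrix.cons_val_one, Matrix.head_cons, Matrix.cons_val_zero,
      Matrix.cons_val_two, Matrix.tail_cons] at h11 h12
    refine ⟨h11, ?_⟩
    rcases mul_eq_zero.1 h12 with h' | h'
    · exact h'
    · exact absurd h' (Complex.exp_ne_zero _)
  · rintro ⟨h1, h2⟩
    ext i j
    fin_cases i <;> fin_cases j <;>
      simp [h1, h2, Matrix.vecHead, Matrix.vecTail]

end
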